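/- Let {A_k : ℝ^m → ℝ^m, k ∈ ℤ} be a sequence of linear isomorphisms for which there is a constant N > 0 with ‖A_k‖ ≤ N and ‖A_k⁻¹‖ ≤ N for all k. Assume that for every bounded sequence {w_k ∈ ℝ^m, k ∈ ℤ} there exists a bounded sequence {v_k ∈ ℝ^m, k ∈ ℤ} such that v_{k+1} = A_k v_k + w_k for all k ∈ ℤ. Then the sequence {A_k} is hyperbolic on the ray (−∞, 0]. -/

import Mathlib

open Filter Topology

/-- Transition map `Φ(k,l)` for `k = l + n`, `n ≥ 0`:
`Φ(l+n+1, l) = A_{l+n} ∘ Φ(l+n, l)`. -/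
noncomputable def PhiPos {m : ℕ}
    (A : ℤ → (EuclideanSpace ℝ (Fin m) ≃L[ℝ] EuclideanSpace ℝ (Fin m))) (l : ℤ) :
    ℕ → (EuclideanSpace ℝ (Fin m) →L[ℝ] EuclideanSpace ℝ (Fin m))
  | 0 => 1
  | n + 1 =>
      ((A (l + n) : EuclideanSpace ℝ (Fin m) →L[ℝ] EuclideanSpace ℝ (Fin m))).comp
        (PhiPos A l n)

/-- Transition map `Φ(k,l)` for `l = k + n`, `n ≥ 0`:
`Φ(k, k+n+1) = Φ(k, k+n) ∘ A_{k+n}⁻¹`. -/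
noncomputable def PhiNeg {m : ℕ}
    (A : ℤ → (EuclideanSpace ℝ (Fin m) ≃L[ℝ] EuclideanSpace ℝ (Fin m))) (k : ℤ) :
    ℕ → (EuclideanSpace ℝ (Fin m) →L[ℝ] EuclideanSpace ℝ (Fin m))
  | 0 => 1
  | n + 1 =>
      (PhiNeg A k n).comp
        (((A (k + n)).symm : EuclideanSpace ℝ (Fin m) →L[ℝ] EuclideanSpace ℝ (Fin m)))

/-- The transition maps `Φ(k,l)`: `Φ(k,l) = A_{k-1} ∘ ⋯ ∘ A_l` for `l < k`,
`Φ(k,k) = Id`, and `Φ(k,l) = A_k⁻¹ ∘ ⋯ ∘ A_{l-1}⁻¹` for `l > k`. -/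
noncomputable def Phi {m : ℕ}
    (A : ℤ → (EuclideanSpace ℝ (Fin m) ≃L[ℝ] EuclideanSpace ℝ (Fin m))) (k l : ℤ) :
    EuclideanSpace ℝ (Fin m) →L[ℝ] EuclideanSpace ℝ (Fin m) :=
  if l ≤ k then PhiPos A l (k - l).toNat else PhiNeg A k (l - k).toNat

/-- `B⁺(𝒜) = {v : ‖Φ(k,0)v‖ → 0 as k → +∞}`. -/
def Bplus {m : ℕ}
    (A : ℤ → (EuclideanSpace ℝ (Fin m) ≃L[ℝ] EuclideanSpace ℝ (Fin m))) :
    Set (EuclideanSpace ℝ (Fin m)) :=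
  {v | Tendsto (fun k : ℤ => ‖Phi A k 0 v‖) atTop (𝓝 0)}

/-- `B⁻(𝒜) = {v : ‖Φ(k,0)v‖ → 0 as k → -∞}`. -/
def Bminus {m : ℕ}
    (A : ℤ → (EuclideanSpace ℝ (Fin m) ≃L[ℝ] EuclideanSpace ℝ (Fin m))) :
    Set (EuclideanSpace ℝ (Fin m)) :=
  {v | Tendsto (fun k : ℤ => ‖Phi A k 0 v‖) atBot (𝓝 0)}

/-- The sequence `𝒜` is hyperbolic on the ray `[0, +∞)`. -/
def HyperbolicOnPlusRay {m : ℕ}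
    (A : ℤ → (EuclideanSpace ℝ (Fin m) ≃L[ℝ] EuclideanSpace ℝ (Fin m))) : Prop :=
  ∃ (C lam : ℝ)
    (P : ℤ → (EuclideanSpace ℝ (Fin m) →L[ℝ] EuclideanSpace ℝ (Fin m))),
    0 < C ∧ lam ∈ Set.Ioo (0 : ℝ) 1 ∧
    (∀ k : ℤ, 0 ≤ k → (P k).comp (P k) = P k) ∧
    (∀ k l : ℤ, 0 ≤ k → 0 ≤ l → (P k).comp (Phi A k l) = (Phi A k l).comp (P l)) ∧
    (∀ k l : ℤ, 0 ≤ l → l ≤ k → ∀ v : EuclideanSpace ℝ (Fin m),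
      ‖Phi A k l (P l v)‖ ≤ C * lam ^ (k - l).toNat * ‖v‖) ∧
    (∀ k l : ℤ, 0 ≤ k → k ≤ l → ∀ v : EuclideanSpace ℝ (Fin m),
      ‖Phi A k l ((1 - P l) v)‖ ≤ C * lam ^ (l - k).toNat * ‖v‖)

/-- The sequence `𝒜` is hyperbolic on the ray `(-∞, 0]`. -/
def HyperbolicOnMinusRay {m : ℕ}
    (A : ℤ → (EuclideanSpace ℝ (Fin m) ≃L[ℝ] EuclideanSpace ℝ (Fin m))) : Prop :=
  ∃ (C lam : ℝ)
    (Q : ℤ → (EuclideanSpace ℝ (Fin m) →L[ℝ] EuclideanSpace ℝ (Fin m))),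
    0 < C ∧ lam ∈ Set.Ioo (0 : ℝ) 1 ∧
    (∀ k : ℤ, k ≤ 0 → (Q k).comp (Q k) = Q k) ∧
    (∀ k l : ℤ, k ≤ 0 → l ≤ 0 → (Q k).comp (Phi A k l) = (Phi A k l).comp (Q l)) ∧
    (∀ k l : ℤ, l ≤ k → k ≤ 0 → ∀ v : EuclideanSpace ℝ (Fin m),
      ‖Phi A k l (Q l v)‖ ≤ C * lam ^ (k - l).toNat * ‖v‖) ∧
    (∀ k l : ℤ, k ≤ l → l ≤ 0 → ∀ v : EuclideanSpace ℝ (Fin m),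
      ‖Phi A k l ((1 - Q l) v)‖ ≤ C * lam ^ (l - k).toNat * ‖v‖)

/-!
Write `X₊ = orbitBddOn A (Set.Ici 0)` and `X₋ = orbitBddOn A (Set.Iic 0)` for the initial values
with bounded forward, resp. backward, orbit, and `L v = (v (k+1) - A k (v k))ₖ` on `ℓ^∞(ℤ, ℝ^m)`.
The kernel of `L` consists of the orbits through `X₊ ⊓ X₋`. Since `L` is onto, the open mapping
theorem bounds its inverse by some `K` on the sequences with `u 0` in a complement `V` of
`X₊ ⊓ X₋`. Solving `L u = δ_{l-1} ξ` shows `X₊ ⊔ X₋ = ⊤` and that the projection onto `X₊ ⊓ V`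
along `X₋`, transported to time `l`, has norm at most `K`. Testing the bound on `u j = c j • x j`,
for an orbit `x` and partial sums `c` of `‖x i‖⁻¹`, gives `‖x n‖ * ∑_{i<n} ‖x i‖⁻¹ ≤ K` along
forward orbits in `X₊ ⊓ V` and backward orbits in `X₋`; this discrete Gronwall inequality forces
geometric decay with ratio `K / (K + 1)`.
-/

theorem le_mul_pow_mul_of_mul_sum_inv_le {K : ℝ} (hK : 0 < K) {c : ℕ → ℝ} (hc : ∀ i, 0 < c i)
    {n : ℕ} (h : ∀ m ≤ n, c m * ∑ i ∈ Finset.range m, (c i)⁻¹ ≤ K) :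
    c n ≤ (K + 1) * (K / (K + 1)) ^ n * c 0 := by
  set S : ℕ → ℝ := fun m => ∑ i ∈ Finset.range m, (c i)⁻¹ with hS
  have hS_succ : ∀ m, S (m + 1) = S m + (c m)⁻¹ := fun m => Finset.sum_range_succ _ _
  -- `c m * S m ≤ K` means `(c m)⁻¹ ≥ S m / K`, so `S` grows at least by the factor `(K + 1) / K`.
  have hgrow : ∀ m ≤ n, ((K + 1) / K) ^ m ≤ c 0 * S (m + 1) := by
    intro m hm
    induction m with
    | zero => simp [hS, (hc 0).ne']
    | succ m ih =>
      have hSm : S (m + 1) / K ≤ (c (m + 1))⁻¹ := by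
        rw [div_le_iff₀ hK, inv_mul_eq_div, le_div_iff₀' (hc _)]
        exact h (m + 1) hm
      calc ((K + 1) / K) ^ (m + 1) = ((K + 1) / K) * ((K + 1) / K) ^ m := pow_succ' _ _
        _ ≤ ((K + 1) / K) * (c 0 * S (m + 1)) := by gcongr; exact ih (by omega)
        _ = c 0 * (S (m + 1) + S (m + 1) / K) := by field_simp
        _ ≤ c 0 * S (m + 1 + 1) := by
          rw [hS_succ (m + 1)]; gcongr; exact (hc 0).le
  have hlast : c n * S (n + 1) ≤ K + 1 := by
    rw [hS_succ, mul_add, mul_inv_cancel₀ (hc n).ne']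
    linarith [h n le_rfl]
  have key : c n * ((K + 1) / K) ^ n ≤ (K + 1) * c 0 :=
    calc c n * ((K + 1) / K) ^ n ≤ c n * (c 0 * S (n + 1)) := by
          gcongr; exact (hc n).le; exact hgrow n le_rfl
      _ = c 0 * (c n * S (n + 1)) := by ring
      _ ≤ c 0 * (K + 1) := by gcongr; exact (hc 0).le
      _ = (K + 1) * c 0 := mul_comm _ _
  have hpow : 0 < ((K + 1) / K) ^ n := by positivity
  rw [← le_div_iff₀ hpow] at key
  calc c n ≤ (K + 1) * c 0 / ((K + 1) / K) ^ n := key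
    _ = (K + 1) * (K / (K + 1)) ^ n * c 0 := by
      rw [div_pow, div_pow]; field_simp

theorem IsCompl.inf_right_of_sup_eq_top {α : Type*} [Lattice α] [BoundedOrder α]
    [IsModularLattice α] {a b c : α} (hab : a ⊔ b = ⊤) (hc : IsCompl (a ⊓ b) c) :
    IsCompl b (a ⊓ c) := by
  constructor
  · rw [disjoint_iff, ← inf_assoc, inf_comm b a, hc.inf_eq_bot]
  · rw [codisjoint_iff, eq_top_iff, ← hab, sup_le_iff]
    refine ⟨?_, le_sup_left⟩
    calc a = (a ⊓ b ⊔ c) ⊓ a := by rw [hc.sup_eq_top, top_inf_eq]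
      _ = a ⊓ b ⊔ c ⊓ a := sup_inf_assoc_of_le c inf_le_left
      _ ≤ b ⊔ a ⊓ c := sup_le_sup inf_le_right (inf_comm c a).le

section InvNormSum

variable {F : Type*} [NormedAddCommGroup F] (x : ℤ → F) (I : Finset ℤ)

noncomputable def invNormSum (j : ℤ) : ℝ :=
  ∑ i ∈ I, if i ≤ j then ‖x i‖⁻¹ else 0

theorem abs_invNormSum_succ_sub_mul_le (j : ℤ) :
    |invNormSum x I (j + 1) - invNormSum x I j| * ‖x (j + 1)‖ ≤ 1 := by
  have hstep : invNormSum x I (j + 1) - invNormSum x I j =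
      ∑ i ∈ I, if j + 1 = i then ‖x i‖⁻¹ else 0 := by
    rw [invNormSum, invNormSum, ← Finset.sum_sub_distrib]
    refine Finset.sum_congr rfl fun i _ => ?_
    by_cases h₁ : j + 1 = i
    · subst h₁
      simp
    · by_cases h₂ : i ≤ j <;> simp [h₁, h₂, show i ≤ j + 1 ↔ i ≤ j by omega]
  rw [hstep, Finset.sum_ite_eq]
  split_ifs
  · rw [abs_of_nonneg (by positivity)]
    exact inv_mul_le_one
  · simp

theorem invNormSum_eq_zero {j : ℤ} (h : ∀ i ∈ I, j < i) : invNormSum x I j = 0 :=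
  Finset.sum_eq_zero fun i hi => if_neg (not_le.mpr (h i hi))

theorem invNormSum_eq_sum {j : ℤ} (h : ∀ i ∈ I, i ≤ j) :
    invNormSum x I j = ∑ i ∈ I, ‖x i‖⁻¹ :=
  Finset.sum_congr rfl fun i hi => if_pos (h i hi)

theorem invNormSum_nonneg (j : ℤ) : 0 ≤ invNormSum x I j :=
  Finset.sum_nonneg fun i _ => by positivity

theorem invNormSum_le_sum (j : ℤ) : invNormSum x I j ≤ ∑ i ∈ I, ‖x i‖⁻¹ :=
  Finset.sum_le_sum fun i _ => by split_ifs <;> simp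

end InvNormSum

section Transition

variable {m : ℕ} (A : ℤ → (EuclideanSpace ℝ (Fin m) ≃L[ℝ] EuclideanSpace ℝ (Fin m)))

local notation "E" => EuclideanSpace ℝ (Fin m)

theorem phiNeg_succ (k : ℤ) (n : ℕ) :
    PhiNeg A k (n + 1) = ((A k).symm : E →L[ℝ] E).comp (PhiNeg A (k + 1) n) := by
  induction n generalizing k with
  | zero => ext v; simp [PhiNeg]
  | succ n ih =>
    rw [PhiNeg, ih, PhiNeg, ContinuousLinearMap.comp_assoc,
      show k + ((n + 1 : ℕ) : ℤ) = k + 1 + n by push_cast; ring]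

theorem phi_of_le {k l : ℤ} (h : k ≤ l) : Phi A k l = PhiNeg A k (l - k).toNat := by
  rw [Phi]
  split_ifs with h'
  · obtain rfl : l = k := le_antisymm h' h
    rw [sub_self, Int.toNat_zero]
    rfl
  · rfl

@[simp] theorem phi_self_apply (k : ℤ) (v : E) : Phi A k k v = v := by
  simp [Phi, PhiPos]

theorem phi_succ_apply (k l : ℤ) (v : E) : Phi A (k + 1) l v = A k (Phi A k l v) := by
  rcases le_or_gt l k with h | h
  · rw [Phi, Phi, if_pos h, if_pos (by omega), show (k + 1 - l).toNat = (k - l).toNat + 1 by omega,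
      PhiPos, show l + ((k - l).toNat : ℤ) = k by omega]
    rfl
  · rw [phi_of_le A h.le, phi_of_le A h, show (l - k).toNat = (l - (k + 1)).toNat + 1 by omega,
      phiNeg_succ]
    simp

theorem eq_phi_of_forall_ge {v : ℤ → E} {l : ℤ} (h : ∀ k, l ≤ k → v (k + 1) = A k (v k))
    {k : ℤ} (hk : l ≤ k) : v k = Phi A k l (v l) := by
  induction k, hk using Int.leInduction with
  | base => simp
  | succ k hk ih => rw [h k hk, ih, phi_succ_apply]

theorem eq_phi_of_forall_lt {v : ℤ → E} {l : ℤ} (h : ∀ k, k < l → v (k + 1) = A k (v k))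
    {k : ℤ} (hk : k ≤ l) : v k = Phi A k l (v l) := by
  induction k, hk using Int.leInductionDown with
  | base => simp
  | pred k hk ih =>
    apply (A (k - 1)).injective
    rw [← phi_succ_apply, sub_add_cancel, ← ih, ← h (k - 1) (by omega), sub_add_cancel]

theorem eq_phi_of_forall {v : ℤ → E} (h : ∀ k, v (k + 1) = A k (v k)) (k l : ℤ) :
    v k = Phi A k l (v l) :=
  (le_total l k).elim (eq_phi_of_forall_ge A fun k _ => h k) (eq_phi_of_forall_lt A fun k _ => h k)

theorem phi_comp_apply (k l j : ℤ) (v : E) : Phi A k l (Phi A l j v) = Phi A k j v :=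
  (eq_phi_of_forall A (v := (Phi A · j v)) (fun i => phi_succ_apply A i j v) k l).symm

theorem phi_apply_ne_zero (k l : ℤ) {v : E} (hv : v ≠ 0) : Phi A k l v ≠ 0 := by
  intro h
  have hback := phi_comp_apply A l k l v
  rw [h, map_zero, phi_self_apply] at hback
  exact hv hback.symm

end Transition

section BoundedOrbits

variable {m : ℕ} (A : ℤ → (EuclideanSpace ℝ (Fin m) ≃L[ℝ] EuclideanSpace ℝ (Fin m)))

local notation "E" => EuclideanSpace ℝ (Fin m)

def orbitBddOn (s : Set ℤ) : Submodule ℝ E where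
  carrier := {ξ | ∃ C, ∀ k ∈ s, ‖Phi A k 0 ξ‖ ≤ C}
  zero_mem' := ⟨0, fun k _ => by simp⟩
  add_mem' := by
    rintro a b ⟨Ca, ha⟩ ⟨Cb, hb⟩
    refine ⟨Ca + Cb, fun k hk => ?_⟩
    rw [map_add]
    exact (norm_add_le _ _).trans (add_le_add (ha k hk) (hb k hk))
  smul_mem' := by
    rintro c a ⟨Ca, ha⟩
    refine ⟨‖c‖ * Ca, fun k hk => ?_⟩
    rw [map_smul, norm_smul]
    exact mul_le_mul_of_nonneg_left (ha k hk) (norm_nonneg _)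

variable {A}

theorem orbitBddOn_anti {s t : Set ℤ} (hst : s ⊆ t) : orbitBddOn A t ≤ orbitBddOn A s :=
  fun _ ⟨C, hC⟩ => ⟨C, fun k hk => hC k (hst hk)⟩

theorem orbitBddOn_union_of_finite (s : Set ℤ) {t : Set ℤ} (ht : t.Finite) :
    orbitBddOn A (s ∪ t) = orbitBddOn A s := by
  refine le_antisymm (orbitBddOn_anti Set.subset_union_left) fun ξ ⟨C, hC⟩ => ?_
  obtain ⟨C', hC'⟩ := (ht.image fun k => ‖Phi A k 0 ξ‖).bddAbove
  refine ⟨max C C', fun k hk => hk.elim (fun hs => le_max_of_le_left (hC k hs))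
    (fun ht => le_max_of_le_right (hC' ⟨k, ht, rfl⟩))⟩

theorem orbitBddOn_Ici (a : ℤ) : orbitBddOn A (Set.Ici a) = orbitBddOn A (Set.Ici 0) := by
  have key : ∀ a b : ℤ, orbitBddOn A (Set.Ici a) ≤ orbitBddOn A (Set.Ici b) := fun a b => by
    rw [← orbitBddOn_union_of_finite (Set.Ici a) (Set.finite_Ico b a)]
    exact orbitBddOn_anti fun k _ => by by_cases a ≤ k <;> simp_all
  exact le_antisymm (key a 0) (key 0 a)

theorem orbitBddOn_Iic (a : ℤ) : orbitBddOn A (Set.Iic a) = orbitBddOn A (Set.Iic 0) := by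
  have key : ∀ a b : ℤ, orbitBddOn A (Set.Iic a) ≤ orbitBddOn A (Set.Iic b) := fun a b => by
    rw [← orbitBddOn_union_of_finite (Set.Iic a) (Set.finite_Ioc a b)]
    exact orbitBddOn_anti fun k _ => by by_cases k ≤ a <;> simp_all
  exact le_antisymm (key a 0) (key 0 a)

theorem exists_bound_of_mem_inf {ξ : E}
    (hξ : ξ ∈ orbitBddOn A (Set.Ici 0) ⊓ orbitBddOn A (Set.Iic 0)) :
    ∃ C, ∀ k, ‖Phi A k 0 ξ‖ ≤ C := by
  obtain ⟨⟨C₁, h₁⟩, ⟨C₂, h₂⟩⟩ := hξ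
  exact ⟨max C₁ C₂, fun k => (le_total 0 k).elim (fun hk => le_max_of_le_left (h₁ k hk))
    (fun hk => le_max_of_le_right (h₂ k hk))⟩

theorem mem_inf_of_orbit {u : ℤ → E} (hu : ∀ k, u (k + 1) = A k (u k))
    (hbdd : ∃ C, ∀ k, ‖u k‖ ≤ C) :
    u 0 ∈ orbitBddOn A (Set.Ici 0) ⊓ orbitBddOn A (Set.Iic 0) := by
  obtain ⟨C, hC⟩ := hbdd
  have hbound : ∀ k, ‖Phi A k 0 (u 0)‖ ≤ C := fun k => eq_phi_of_forall A hu k 0 ▸ hC k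
  exact ⟨⟨C, fun k _ => hbound k⟩, ⟨C, fun k _ => hbound k⟩⟩

end BoundedOrbits

section DifferenceOperator

open scoped BoundedContinuousFunction

variable {m : ℕ} (A : ℤ → (EuclideanSpace ℝ (Fin m) ≃L[ℝ] EuclideanSpace ℝ (Fin m)))

local notation "E" => EuclideanSpace ℝ (Fin m)

def BoundedSolvable : Prop :=
  ∀ w : ℤ → E, (∃ C : ℝ, ∀ k : ℤ, ‖w k‖ ≤ C) →
    ∃ v : ℤ → E, (∃ C : ℝ, ∀ k : ℤ, ‖v k‖ ≤ C) ∧ ∀ k : ℤ, v (k + 1) = A k (v k) + w k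

def InverseBound (V : Submodule ℝ E) (K : ℝ) : Prop :=
  ∀ (u : ℤ → E) (M : ℝ), (∃ C : ℝ, ∀ k, ‖u k‖ ≤ C) → u 0 ∈ V →
    (∀ k, ‖u (k + 1) - A k (u k)‖ ≤ M) → ∀ k, ‖u k‖ ≤ K * M

variable {A}

theorem exists_solution_mem (hsolv : BoundedSolvable A) {V : Submodule ℝ E}
    (hV : IsCompl (orbitBddOn A (Set.Ici 0) ⊓ orbitBddOn A (Set.Iic 0)) V)
    {w : ℤ → E} (hw : ∃ C : ℝ, ∀ k, ‖w k‖ ≤ C) :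
    ∃ u : ℤ → E, (∃ C : ℝ, ∀ k, ‖u k‖ ≤ C) ∧ u 0 ∈ V ∧ ∀ k, u (k + 1) = A k (u k) + w k := by
  obtain ⟨v, ⟨C, hC⟩, hv⟩ := hsolv w hw
  obtain ⟨a, ha, b, hb, hab⟩ := Submodule.mem_sup.mp (hV.sup_eq_top ▸ Submodule.mem_top (x := v 0))
  obtain ⟨Ca, hCa⟩ := exists_bound_of_mem_inf ha
  refine ⟨fun k => v k - Phi A k 0 a, ⟨C + Ca, fun k => (norm_sub_le _ _).trans
    (add_le_add (hC k) (hCa k))⟩, ?_, fun k => ?_⟩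
  · simpa [← hab] using hb
  · simp only [hv k, phi_succ_apply, map_sub]
    abel

theorem norm_succ_sub_apply_le {N : ℝ} (hA : ∀ k, ‖(A k : E →L[ℝ] E)‖ ≤ N) (v : ℤ →ᵇ E)
    (k : ℤ) : ‖v (k + 1) - A k (v k)‖ ≤ (1 + N) * ‖v‖ :=
  calc ‖v (k + 1) - A k (v k)‖ ≤ ‖v (k + 1)‖ + ‖(A k : E →L[ℝ] E)‖ * ‖v k‖ :=
        (norm_sub_le _ _).trans (by gcongr; exact (A k : E →L[ℝ] E).le_opNorm _)
    _ ≤ ‖v‖ + N * ‖v‖ := by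
        gcongr
        · exact v.norm_coe_le_norm _
        · exact (norm_nonneg _).trans (hA 0)
        · exact hA k
        · exact v.norm_coe_le_norm _
    _ = (1 + N) * ‖v‖ := by ring

noncomputable def diffOp {N : ℝ} (hA : ∀ k, ‖(A k : E →L[ℝ] E)‖ ≤ N) :
    (ℤ →ᵇ E) →L[ℝ] (ℤ →ᵇ E) :=
  LinearMap.mkContinuous
    { toFun := fun v => BoundedContinuousFunction.ofNormedAddCommGroup
        (fun k => v (k + 1) - A k (v k)) continuous_of_discreteTopology _
        (norm_succ_sub_apply_le hA v)
      map_add' := fun v w => BoundedContinuousFunction.ext fun k => by simp; abel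
      map_smul' := fun c v => BoundedContinuousFunction.ext fun k => by simp [smul_sub] }
    (1 + N) fun v => BoundedContinuousFunction.norm_ofNormedAddCommGroup_le _
      (by have := (norm_nonneg _).trans (hA 0); positivity) (norm_succ_sub_apply_le hA v)

@[simp] theorem diffOp_apply {N : ℝ} (hA : ∀ k, ‖(A k : E →L[ℝ] E)‖ ≤ N) (v : ℤ →ᵇ E) (k : ℤ) :
    diffOp hA v k = v (k + 1) - A k (v k) := rfl

end DifferenceOperator

section OpenMapping

open scoped BoundedContinuousFunction

variable {m : ℕ} {A : ℤ → (EuclideanSpace ℝ (Fin m) ≃L[ℝ] EuclideanSpace ℝ (Fin m))}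

local notation "E" => EuclideanSpace ℝ (Fin m)

theorem eq_zero_of_diffOp_eq_zero {N : ℝ} (hA : ∀ k, ‖(A k : E →L[ℝ] E)‖ ≤ N)
    {V : Submodule ℝ E} (hV : IsCompl (orbitBddOn A (Set.Ici 0) ⊓ orbitBddOn A (Set.Iic 0)) V)
    {u : ℤ →ᵇ E} (hu0 : u 0 ∈ V) (hu : diffOp hA u = 0) : u = 0 := by
  have horbit : ∀ k, u (k + 1) = A k (u k) := fun k =>
    sub_eq_zero.mp (by simpa using DFunLike.congr_fun hu k)
  have h0 : u 0 = 0 := Submodule.disjoint_def.mp hV.disjoint _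
    (mem_inf_of_orbit horbit ⟨‖u‖, u.norm_coe_le_norm⟩) hu0
  exact BoundedContinuousFunction.ext fun k => by simp [eq_phi_of_forall A horbit k 0, h0]

theorem exists_inverseBound {N : ℝ} (hA : ∀ k, ‖(A k : E →L[ℝ] E)‖ ≤ N)
    (hsolv : BoundedSolvable A) {V : Submodule ℝ E}
    (hV : IsCompl (orbitBddOn A (Set.Ici 0) ⊓ orbitBddOn A (Set.Iic 0)) V) :
    ∃ K, 0 < K ∧ InverseBound A V K := by
  let ev₀ : (ℤ →ᵇ E) →L[ℝ] E := BoundedContinuousFunction.evalCLM ℝ 0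
  let Z : Submodule ℝ (ℤ →ᵇ E) := V.comap ev₀.toLinearMap
  have : CompleteSpace Z :=
    (V.closed_of_finiteDimensional.preimage ev₀.continuous).completeSpace_coe
  let T : Z →L[ℝ] (ℤ →ᵇ E) := (diffOp hA).comp Z.subtypeL
  have hinj : Function.Injective T := fun u v huv => Subtype.ext <| sub_eq_zero.mp <|
    eq_zero_of_diffOp_eq_zero hA hV (sub_mem u.2 v.2) (by rw [map_sub]; exact sub_eq_zero.mpr huv)
  have hsurj : Function.Surjective T := fun w => by
    obtain ⟨u, ⟨C, hC⟩, hu0, hu⟩ := exists_solution_mem hsolv hV ⟨‖w‖, w.norm_coe_le_norm⟩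
    exact ⟨⟨.ofNormedAddCommGroup u continuous_of_discreteTopology C hC, hu0⟩,
      BoundedContinuousFunction.ext fun k => by simp [T, hu]⟩
  -- The instance arguments are unified with those in the type of `T`: the synthesized
  -- topology on `Z` is not reducibly defeq to the one `T` was built with.
  obtain ⟨K, hK⟩ := @ContinuousLinearMap.antilipschitz_of_injective_of_isClosed_range ℝ _ Z
    (ℤ →ᵇ E) _ _ _ _ _ _ T hinj (by rw [hsurj.range_eq]; exact isClosed_univ)
  refine ⟨K + 1, by positivity, fun u M ⟨C, hC⟩ hu0 hM k => ?_⟩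
  let ub : Z := ⟨.ofNormedAddCommGroup u continuous_of_discreteTopology C hC, hu0⟩
  have hM0 : 0 ≤ M := (norm_nonneg _).trans (hM 0)
  have hT : ‖T ub‖ ≤ M := (BoundedContinuousFunction.norm_le hM0).2 hM
  calc ‖u k‖ ≤ ‖ub‖ := (ub : ℤ →ᵇ E).norm_coe_le_norm k
    _ ≤ K * ‖T ub‖ := by
      have h := hK.le_mul_dist ub 0
      rw [show T 0 = 0 from (diffOp hA).map_zero, dist_zero_right] at h
      exact (dist_zero_right ub).symm.trans_le h
    _ ≤ (K + 1) * M := by gcongr; linarith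

end OpenMapping

section Impulse

variable {m : ℕ} {A : ℤ → (EuclideanSpace ℝ (Fin m) ≃L[ℝ] EuclideanSpace ℝ (Fin m))}

local notation "E" => EuclideanSpace ℝ (Fin m)

theorem norm_impulse_le (l : ℤ) (ξ : E) (k : ℤ) : ‖(if k = l - 1 then ξ else 0 : E)‖ ≤ ‖ξ‖ := by
  split_ifs <;> simp

theorem mem_of_impulse_response {u : ℤ → E} (hbdd : ∃ C : ℝ, ∀ k, ‖u k‖ ≤ C) {l : ℤ}
    (hl : l ≤ 0) {ξ : E} (hu : ∀ k, u (k + 1) = A k (u k) + if k = l - 1 then ξ else 0) :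
    u 0 ∈ orbitBddOn A (Set.Ici 0) ∧ u 0 - Phi A 0 l ξ ∈ orbitBddOn A (Set.Iic 0) := by
  obtain ⟨C, hC⟩ := hbdd
  have hfwd : ∀ k, l ≤ k → u (k + 1) = A k (u k) := fun k hk => by
    simpa [show k ≠ l - 1 by omega] using hu k
  have hbwd : ∀ k, k < l - 1 → u (k + 1) = A k (u k) := fun k hk => by
    simpa [show k ≠ l - 1 by omega] using hu k
  have hjump : u l = Phi A l (l - 1) (u (l - 1)) + ξ := by
    have h := hu (l - 1)
    have hstep := phi_succ_apply A (l - 1) (l - 1) (u (l - 1))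
    simp only [sub_add_cancel, if_pos, phi_self_apply] at h hstep
    rw [h, hstep]
  have hζ : u 0 - Phi A 0 l ξ = Phi A 0 (l - 1) (u (l - 1)) := by
    rw [eq_phi_of_forall_ge A hfwd hl, hjump, map_add, add_sub_cancel_right, phi_comp_apply]
  refine ⟨⟨C, fun k hk => ?_⟩, orbitBddOn_Iic (l - 1) ▸ ⟨C, fun k hk => ?_⟩⟩
  · rw [← eq_phi_of_forall_ge A (fun k hk => hfwd k (hl.trans hk)) hk]
    exact hC k
  · rw [hζ, phi_comp_apply, ← eq_phi_of_forall_lt A hbwd hk]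
    exact hC k

theorem orbitBddOn_sup_eq_top (hsolv : BoundedSolvable A) :
    orbitBddOn A (Set.Ici 0) ⊔ orbitBddOn A (Set.Iic 0) = ⊤ := by
  refine eq_top_iff.mpr fun ξ _ => ?_
  obtain ⟨u, hbdd, hu⟩ := hsolv _ ⟨‖ξ‖, norm_impulse_le 0 ξ⟩
  obtain ⟨h₁, h₂⟩ := mem_of_impulse_response hbdd le_rfl hu
  rw [phi_self_apply] at h₂
  exact Submodule.mem_sup.mpr ⟨u 0, h₁, -(u 0 - ξ), neg_mem h₂, by abel⟩

theorem norm_phi_projection_le (hsolv : BoundedSolvable A) {V : Submodule ℝ E}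
    (hV : IsCompl (orbitBddOn A (Set.Ici 0) ⊓ orbitBddOn A (Set.Iic 0)) V) {K : ℝ}
    (hK : InverseBound A V K)
    (hW : IsCompl (orbitBddOn A (Set.Ici 0) ⊓ V) (orbitBddOn A (Set.Iic 0))) {l : ℤ} (hl : l ≤ 0)
    (ξ : E) : ‖Phi A l 0 ((orbitBddOn A (Set.Ici 0) ⊓ V).projection _ hW (Phi A 0 l ξ))‖ ≤
      K * ‖ξ‖ := by
  obtain ⟨u, hbdd, hu0, hu⟩ := exists_solution_mem hsolv hV ⟨‖ξ‖, norm_impulse_le l ξ⟩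
  obtain ⟨h₁, h₂⟩ := mem_of_impulse_response hbdd hl hu
  have hP : (orbitBddOn A (Set.Ici 0) ⊓ V).projection _ hW (Phi A 0 l ξ) = u 0 := by
    rw [← sub_sub_cancel (u 0) (Phi A 0 l ξ), map_sub,
      Submodule.projection_apply_of_mem_left hW ⟨h₁, hu0⟩,
      Submodule.projection_apply_of_mem_right hW h₂, sub_zero]
  have hul : u 0 = Phi A 0 l (u l) := eq_phi_of_forall_ge A (fun k hk => by
    simpa [show k ≠ l - 1 by omega] using hu k) hl
  rw [hP, hul, phi_comp_apply, phi_self_apply]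
  exact hK u ‖ξ‖ hbdd hu0
    (fun k => by rw [hu k, add_sub_cancel_left]; exact norm_impulse_le l ξ k) l

end Impulse

section Dichotomy

variable {m : ℕ} {A : ℤ → (EuclideanSpace ℝ (Fin m) ≃L[ℝ] EuclideanSpace ℝ (Fin m))}

local notation "E" => EuclideanSpace ℝ (Fin m)

variable {V : Submodule ℝ (EuclideanSpace ℝ (Fin m))} {K : ℝ}

theorem abs_mul_norm_le_of_inverseBound (hK : InverseBound A V K)
    {x : ℤ → E} (hx : ∀ j, x (j + 1) = A j (x j)) {c : ℤ → ℝ}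
    (hbdd : ∃ C : ℝ, ∀ j, |c j| * ‖x j‖ ≤ C) (h0 : c 0 • x 0 ∈ V)
    (hc : ∀ j, |c (j + 1) - c j| * ‖x (j + 1)‖ ≤ 1) (j : ℤ) : |c j| * ‖x j‖ ≤ K := by
  have hdiff : ∀ j, c (j + 1) • x (j + 1) - A j (c j • x j) = (c (j + 1) - c j) • x (j + 1) :=
    fun j => by rw [map_smul, ← hx, sub_smul]
  simpa [norm_smul] using hK (fun j => c j • x j) 1 (by simpa [norm_smul] using hbdd) h0
    (fun j => by rw [hdiff, norm_smul, Real.norm_eq_abs]; exact hc j) j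

theorem norm_mul_sum_inv_le_of_mem_Iic (hK : InverseBound A V K) {ξ : E}
    (hξ : ξ ∈ orbitBddOn A (Set.Iic 0)) {l : ℤ} (hl : l ≤ 0) (n : ℕ) :
    ‖Phi A (l - n) 0 ξ‖ * ∑ i ∈ Finset.range n, ‖Phi A (l - i) 0 ξ‖⁻¹ ≤ K := by
  let x : ℤ → E := fun j => Phi A j 0 ξ
  let I : Finset ℤ := (Finset.range n).image fun i : ℕ => l - i
  have hI : ∀ i ∈ I, l - n < i ∧ i ≤ l := by simp [I]
  have hsum : ∑ i ∈ I, ‖x i‖⁻¹ = ∑ i ∈ Finset.range n, ‖Phi A (l - i) 0 ξ‖⁻¹ :=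
    Finset.sum_image fun a _ b _ h => by simpa using h
  set S := ∑ i ∈ I, ‖x i‖⁻¹
  have hS : 0 ≤ S := by positivity
  obtain ⟨C, hC⟩ := hξ
  have hC0 : 0 ≤ C := (norm_nonneg _).trans (hC 0 Set.self_mem_Iic)
  have hbdd : ∀ j, |invNormSum x I j - S| * ‖x j‖ ≤ S * C := fun j => by
    rcases le_or_gt j 0 with hj | hj
    · refine mul_le_mul ?_ (hC j hj) (norm_nonneg _) hS
      rw [abs_sub_comm, abs_of_nonneg (sub_nonneg.mpr (invNormSum_le_sum x I j))]
      linarith [invNormSum_nonneg x I j]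
    · rw [invNormSum_eq_sum x I fun i hi => by linarith [(hI i hi).2], sub_self, abs_zero,
        zero_mul]
      positivity
  -- `c = invNormSum x I - S` vanishes from `l` on, so only the backward orbit has to be bounded.
  have h := abs_mul_norm_le_of_inverseBound hK (x := x) (fun j => phi_succ_apply A j 0 ξ)
    (c := fun j => invNormSum x I j - S) ⟨_, hbdd⟩
    (by simp [invNormSum_eq_sum x I fun i hi => (hI i hi).2.trans hl, S])
    (fun j => by simpa using abs_invNormSum_succ_sub_mul_le x I j) (l - n)
  rwa [invNormSum_eq_zero x I fun i hi => (hI i hi).1, zero_sub, abs_neg, abs_of_nonneg hS,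
    mul_comm, hsum] at h

theorem norm_mul_sum_inv_le_of_mem_Ici (hK : InverseBound A V K) {η : E}
    (hη : η ∈ orbitBddOn A (Set.Ici 0)) (hηV : η ∈ V) (l : ℤ) (n : ℕ) :
    ‖Phi A (l + n) 0 η‖ * ∑ i ∈ Finset.range n, ‖Phi A (l + i) 0 η‖⁻¹ ≤ K := by
  let x : ℤ → E := fun j => Phi A j 0 η
  let I : Finset ℤ := (Finset.range n).image fun i : ℕ => l + i
  have hI : ∀ i ∈ I, l ≤ i ∧ i < l + n := by simp [I]
  have hsum : ∑ i ∈ I, ‖x i‖⁻¹ = ∑ i ∈ Finset.range n, ‖Phi A (l + i) 0 η‖⁻¹ :=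
    Finset.sum_image fun a _ b _ h => by simpa using h
  set S := ∑ i ∈ I, ‖x i‖⁻¹
  have hS : 0 ≤ S := by positivity
  obtain ⟨C, hC⟩ := orbitBddOn_Ici l ▸ hη
  have hC0 : 0 ≤ C := (norm_nonneg _).trans (hC l Set.self_mem_Ici)
  have hbdd : ∀ j, |invNormSum x I j| * ‖x j‖ ≤ S * C := fun j => by
    rcases le_or_gt l j with hj | hj
    · refine mul_le_mul ?_ (hC j hj) (norm_nonneg _) hS
      rw [abs_of_nonneg (invNormSum_nonneg x I j)]
      exact invNormSum_le_sum x I j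
    · rw [invNormSum_eq_zero x I fun i hi => by linarith [(hI i hi).1], abs_zero, zero_mul]
      positivity
  -- `c = invNormSum x I` vanishes before `l`, so only the forward orbit has to be bounded.
  have h := abs_mul_norm_le_of_inverseBound hK (x := x) (fun j => phi_succ_apply A j 0 η)
    ⟨_, hbdd⟩ (Submodule.smul_mem _ _ (by simpa [x] using hηV))
    (abs_invNormSum_succ_sub_mul_le x I) (l + n)
  rwa [invNormSum_eq_sum x I fun i hi => (hI i hi).2.le, abs_of_nonneg hS, mul_comm, hsum] at h

theorem norm_phi_sub_le_of_mem_Iic (hK0 : 0 < K) (hK : InverseBound A V K) {ξ : E}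
    (hξ : ξ ∈ orbitBddOn A (Set.Iic 0)) {l : ℤ} (hl : l ≤ 0) (n : ℕ) :
    ‖Phi A (l - n) 0 ξ‖ ≤ (K + 1) * (K / (K + 1)) ^ n * ‖Phi A l 0 ξ‖ := by
  rcases eq_or_ne ξ 0 with rfl | hξ0
  · simp
  simpa using le_mul_pow_mul_of_mul_sum_inv_le hK0 (c := fun i : ℕ => ‖Phi A (l - i) 0 ξ‖)
    (fun i => norm_pos_iff.mpr (phi_apply_ne_zero A _ _ hξ0))
    (fun i _ => norm_mul_sum_inv_le_of_mem_Iic hK hξ hl i)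

theorem norm_phi_add_le_of_mem_Ici (hK0 : 0 < K) (hK : InverseBound A V K) {η : E}
    (hη : η ∈ orbitBddOn A (Set.Ici 0)) (hηV : η ∈ V) (l : ℤ) (n : ℕ) :
    ‖Phi A (l + n) 0 η‖ ≤ (K + 1) * (K / (K + 1)) ^ n * ‖Phi A l 0 η‖ := by
  rcases eq_or_ne η 0 with rfl | hη0
  · simp
  simpa using le_mul_pow_mul_of_mul_sum_inv_le hK0 (c := fun i : ℕ => ‖Phi A (l + i) 0 η‖)
    (fun i => norm_pos_iff.mpr (phi_apply_ne_zero A _ _ hη0))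
    (fun i _ => norm_mul_sum_inv_le_of_mem_Ici hK hη hηV l i)

end Dichotomy

section Hyperbolicity

variable {m : ℕ} {A : ℤ → (EuclideanSpace ℝ (Fin m) ≃L[ℝ] EuclideanSpace ℝ (Fin m))}

local notation "E" => EuclideanSpace ℝ (Fin m)

theorem hyperbolicOnMinusRay_of_isCompl {W U : Submodule ℝ E} (hWU : IsCompl W U) {K : ℝ}
    (hK0 : 0 < K)
    (hproj : ∀ l ≤ 0, ∀ v, ‖Phi A l 0 (W.projection U hWU (Phi A 0 l v))‖ ≤ K * ‖v‖)
    (hW : ∀ η ∈ W, ∀ (l : ℤ) (n : ℕ),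
      ‖Phi A (l + n) 0 η‖ ≤ (K + 1) * (K / (K + 1)) ^ n * ‖Phi A l 0 η‖)
    (hU : ∀ ξ ∈ U, ∀ l ≤ 0, ∀ n : ℕ,
      ‖Phi A (l - n) 0 ξ‖ ≤ (K + 1) * (K / (K + 1)) ^ n * ‖Phi A l 0 ξ‖) :
    HyperbolicOnMinusRay A := by
  set P := W.projection U hWU
  let Q : ℤ → (E →L[ℝ] E) := fun l => (Phi A l 0).comp (P.toContinuousLinearMap.comp (Phi A 0 l))
  have hQ : ∀ l v, Q l v = Phi A l 0 (P (Phi A 0 l v)) := fun _ _ => rfl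
  have hPU : ∀ x, x - P x ∈ U := fun x => by
    rw [← Submodule.projection_eq_self_sub_projection]
    exact Submodule.projection_apply_mem _ _
  refine ⟨(K + 1) ^ 2, K / (K + 1), Q, by positivity,
    ⟨by positivity, (div_lt_one (by linarith)).mpr (by linarith)⟩, fun k _ => ?_,
    fun k l _ _ => ?_, fun k l hlk hk v => ?_, fun k l hkl hl v => ?_⟩
  · ext1 v
    simp [hQ, phi_comp_apply, P, Submodule.projection_apply_of_mem_left]
  · ext1 v
    simp [hQ, phi_comp_apply]
  · obtain ⟨n, rfl⟩ : ∃ n : ℕ, k = l + n := ⟨(k - l).toNat, by omega⟩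
    rw [show (l + n - l).toNat = n by omega]
    calc ‖Phi A (l + n) l (Q l v)‖ = ‖Phi A (l + n) 0 (P (Phi A 0 l v))‖ := by
          rw [hQ, phi_comp_apply]
      _ ≤ (K + 1) * (K / (K + 1)) ^ n * ‖Phi A l 0 (P (Phi A 0 l v))‖ :=
          hW _ (Submodule.projection_apply_mem _ _) l n
      _ ≤ (K + 1) * (K / (K + 1)) ^ n * (K * ‖v‖) := by gcongr; exact hproj l (hlk.trans hk) v
      _ ≤ (K + 1) ^ 2 * (K / (K + 1)) ^ n * ‖v‖ := by
          have : 0 ≤ (K / (K + 1)) ^ n * ‖v‖ := by positivity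
          nlinarith
  · obtain ⟨n, rfl⟩ : ∃ n : ℕ, k = l - n := ⟨(l - k).toNat, by omega⟩
    rw [show (l - (l - n)).toNat = n by omega]
    have hξ : (1 - Q l) v = Phi A l 0 (Phi A 0 l v - P (Phi A 0 l v)) := by
      simp [hQ, phi_comp_apply]
    calc ‖Phi A (l - n) l ((1 - Q l) v)‖ = ‖Phi A (l - n) 0 (Phi A 0 l v - P (Phi A 0 l v))‖ := by
          rw [hξ, phi_comp_apply]
      _ ≤ (K + 1) * (K / (K + 1)) ^ n * ‖(1 - Q l) v‖ := by
          rw [hξ]; exact hU _ (hPU _) l hl n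
      _ ≤ (K + 1) * (K / (K + 1)) ^ n * ((K + 1) * ‖v‖) := by
          gcongr
          calc ‖(1 - Q l) v‖ ≤ ‖v‖ + ‖Q l v‖ := norm_sub_le _ _
            _ ≤ (K + 1) * ‖v‖ := by rw [hQ]; linarith [hproj l hl v]
      _ = (K + 1) ^ 2 * (K / (K + 1)) ^ n * ‖v‖ := by ring

end Hyperbolicity

theorem hyperbolicOnMinusRay_of_bounded_solvability_general
    {m : ℕ} (A : ℤ → (EuclideanSpace ℝ (Fin m) ≃L[ℝ] EuclideanSpace ℝ (Fin m)))
    (N : ℝ)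
    (hA : ∀ k : ℤ, ‖(A k : EuclideanSpace ℝ (Fin m) →L[ℝ] EuclideanSpace ℝ (Fin m))‖ ≤ N)
    (hsolv : ∀ w : ℤ → EuclideanSpace ℝ (Fin m), (∃ C : ℝ, ∀ k : ℤ, ‖w k‖ ≤ C) →
      ∃ v : ℤ → EuclideanSpace ℝ (Fin m), (∃ C : ℝ, ∀ k : ℤ, ‖v k‖ ≤ C) ∧
        ∀ k : ℤ, v (k + 1) = A k (v k) + w k) :
    HyperbolicOnMinusRay A := by
  obtain ⟨V, hV⟩ := Submodule.exists_isCompl (orbitBddOn A (Set.Ici 0) ⊓ orbitBddOn A (Set.Iic 0))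
  have hWU := (IsCompl.inf_right_of_sup_eq_top (orbitBddOn_sup_eq_top hsolv) hV).symm
  obtain ⟨K, hK0, hK⟩ := exists_inverseBound hA hsolv hV
  exact hyperbolicOnMinusRay_of_isCompl hWU hK0
    (fun l hl => norm_phi_projection_le hsolv hV hK hWU hl)
    (fun η hη => norm_phi_add_le_of_mem_Ici hK0 hK hη.1 hη.2)
    (fun ξ hξ l hl => norm_phi_sub_le_of_mem_Iic hK0 hK hξ hl)

/-- If for every bounded sequence `{w_k}` the difference equation `v_{k+1} = A_k v_k + w_k`
has a bounded solution `{v_k}`, then the sequence `{A_k}` is hyperbolic on the ray `(-∞,0]`. -/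
theorem hyperbolicOnMinusRay_of_bounded_solvability
    {m : ℕ} (A : ℤ → (EuclideanSpace ℝ (Fin m) ≃L[ℝ] EuclideanSpace ℝ (Fin m)))
    (N : ℝ) (hN : 0 < N)
    (hA : ∀ k : ℤ, ‖(A k : EuclideanSpace ℝ (Fin m) →L[ℝ] EuclideanSpace ℝ (Fin m))‖ ≤ N)
    (hAinv : ∀ k : ℤ,
      ‖((A k).symm : EuclideanSpace ℝ (Fin m) →L[ℝ] EuclideanSpace ℝ (Fin m))‖ ≤ N)
    (hsolv : ∀ w : ℤ → EuclideanSpace ℝ (Fin m), (∃ C : ℝ, ∀ k : ℤ, ‖w k‖ ≤ C) →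
      ∃ v : ℤ → EuclideanSpace ℝ (Fin m), (∃ C : ℝ, ∀ k : ℤ, ‖v k‖ ≤ C) ∧
        ∀ k : ℤ, v (k + 1) = A k (v k) + w k) :
    HyperbolicOnMinusRay A :=
  hyperbolicOnMinusRay_of_bounded_solvability_general A N hA hsolv
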